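/- arXiv:1703.08044 — 4 statements merged into one kernel-verified Lean document; each statement's English description precedes it below -/
import Mathlib

section
/- Let K ≥ 1, S ≥ 2. For h in (ℝ^S)^K with all components h_k nonzero, define P(h) as the order-K tensor with entries P(h)_{i_1,...,i_K} = h_{1,i_1} ⋯ h_{K,i_K}. Then for two such parameter tuples h and g, P(h) = P(g) if and only if there exist scalars λ_1,...,λ_K with ∏_k λ_k = 1 and h_k = λ_k g_k for all k. -/
open scoped BigOperators ENNReal
open Finset

/-- Parameters of the network: `K` vectors in `ℝ^S`. -/
abbrev Params (K S : ℕ) := Fin K → Fin S → ℝ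

/-- Order-`K` tensors with all sides of size `S`. -/
abbrev Tensor (K S : ℕ) := (Fin K → Fin S) → ℝ

/-- The Segre map: `P(h)_{i_1,…,i_K} = h_{1,i_1} ⋯ h_{K,i_K}`. -/
noncomputable def Segre {K S : ℕ} (h : Params K S) : Tensor K S :=
  fun i => ∏ k, h k (i k)

/-- Parameters with all components nonzero. -/
def hSstar (K S : ℕ) : Set (Params K S) := {h | ∀ k, h k ≠ 0}

/-- The rescaling equivalence class of `h` (product of scales equal to `1`). -/
def CL {K S : ℕ} (h : Params K S) : Set (Params K S) :=
  {g | ∃ lam : Fin K → ℝ, (∏ k, lam k) = 1 ∧ ∀ k, g k = lam k • h k}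

/-- Sup norm on `ℝ^S`. -/
noncomputable def supnorm {S : ℕ} (x : Fin S → ℝ) : ℝ := ⨆ i, |x i|

/-- Parameters in `hSstar` whose components all have the same sup norm. -/
def hSdiag (K S : ℕ) : Set (Params K S) :=
  hSstar K S ∩ {h | ∀ k k' : Fin K, supnorm (h k) = supnorm (h k')}

/-- Entrywise `ℓ^p` norm, `p ∈ [1,∞]`. -/
noncomputable def pnorm (p : ℝ≥0∞) {ι : Type*} [Fintype ι] (x : ι → ℝ) : ℝ :=
  if p = ∞ then ⨆ i, |x i| else (∑ i, |x i| ^ p.toReal) ^ (1 / p.toReal)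

/-- Flatten parameters into a vector of length `K·S`. -/
def flat {K S : ℕ} (h : Params K S) : Fin K × Fin S → ℝ := fun ki => h ki.1 ki.2

/-- The distance `d_p` between rescaling classes, via representatives in `hSdiag`. -/
noncomputable def dDist {K S : ℕ} (p : ℝ≥0∞) (h g : Params K S) : ℝ :=
  sInf ((fun pr : Params K S × Params K S => pnorm p (flat pr.1 - flat pr.2)) ''
    {pr | pr.1 ∈ CL h ∩ hSdiag K S ∧ pr.2 ∈ CL g ∩ hSdiag K S})

section ProdApply

variable {ι α M : Type*} [Fintype ι]

theorem prod_apply_update [DecidableEq ι] [CommMonoid M] (f : ι → α → M) (j : ι → α)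
    (k : ι) (a : α) :
    ∏ l, f l (Function.update j k a l) = f k a * ∏ l ∈ univ \ {k}, f l (j l) := by
  simp only [Function.apply_update f j k a]
  exact prod_update_of_mem (mem_univ k) _ _

/-- The tuples `j` and `update j k a` share every factor but the `k`-th, and the shared factors
do not vanish since the product along `j` does not. -/
theorem mul_eq_mul_of_prod_apply_eq [CommGroupWithZero M] {f g : ι → α → M}
    (hfg : ∀ i : ι → α, ∏ l, f l (i l) = ∏ l, g l (i l)) {j : ι → α}
    (hj : ∏ l, g l (j l) ≠ 0) (k : ι) (a : α) :
    f k a * g k (j k) = f k (j k) * g k a := by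
  classical
  set F := ∏ l ∈ univ \ {k}, f l (j l)
  set G := ∏ l ∈ univ \ {k}, g l (j l)
  have hsplit : ∀ φ : ι → α → M, ∏ l, φ l (j l) = φ k (j k) * ∏ l ∈ univ \ {k}, φ l (j l) :=
    fun φ => by simpa only [Function.update_eq_self] using prod_apply_update φ j k (j k)
  have hbase : f k (j k) * F = g k (j k) * G := by
    rw [← hsplit f, ← hsplit g]
    exact hfg j
  have hupdate : f k a * F = g k a * G := by
    simpa only [prod_apply_update] using hfg (Function.update j k a)
  have hG : g k (j k) * G ≠ 0 := hsplit g ▸ hj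
  have hF : F ≠ 0 := right_ne_zero_of_mul (hbase ▸ hG)
  apply mul_right_cancel₀ (mul_ne_zero hF (right_ne_zero_of_mul hG))
  calc f k a * g k (j k) * (F * G) = (f k a * F) * (g k (j k) * G) := mul_mul_mul_comm ..
    _ = (f k (j k) * F) * (g k a * G) := by rw [hupdate, hbase, mul_comm]
    _ = f k (j k) * g k a * (F * G) := mul_mul_mul_comm ..

theorem exists_prod_eq_one_smul_of_prod_apply_eq [CommGroupWithZero M] {f g : ι → α → M}
    (hfg : ∀ i : ι → α, ∏ l, f l (i l) = ∏ l, g l (i l)) (hg : ∀ k, g k ≠ 0) :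
    ∃ lam : ι → M, ∏ k, lam k = 1 ∧ ∀ k, f k = lam k • g k := by
  choose j hj using fun k => Function.ne_iff.mp (hg k)
  have hprod : ∏ l, g l (j l) ≠ 0 := prod_ne_zero_iff.mpr fun l _ => hj l
  refine ⟨fun k => f k (j k) / g k (j k), ?_, fun k => funext fun a => ?_⟩
  · rw [prod_div_distrib, hfg j, div_self hprod]
  · rw [Pi.smul_apply, smul_eq_mul, div_mul_eq_mul_div, eq_div_iff (hj k)]
    exact mul_eq_mul_of_prod_apply_eq hfg hprod k a

theorem prod_apply_eq_of_smul [CommMonoid M] {f g : ι → α → M} {lam : ι → M}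
    (hlam : ∏ k, lam k = 1) (hfg : ∀ k, f k = lam k • g k) (i : ι → α) :
    ∏ l, f l (i l) = ∏ l, g l (i l) := by
  simp only [hfg, Pi.smul_apply, smul_eq_mul, prod_mul_distrib, hlam, one_mul]

end ProdApply

theorem segre_eq_iff_rescaling_general {K S : ℕ}
    (h g : Params K S) (hg : g ∈ hSstar K S) :
    Segre h = Segre g ↔
      ∃ lam : Fin K → ℝ, (∏ k, lam k) = 1 ∧ ∀ k, h k = lam k • g k := by
  refine ⟨fun hP => exists_prod_eq_one_smul_of_prod_apply_eq (congrFun hP) hg, ?_⟩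
  rintro ⟨lam, hlam, hhg⟩
  exact funext (prod_apply_eq_of_smul hlam hhg)

/-- identifiability of the class `CL(h)` from the Segre tensor `P(h)`. -/
theorem segre_eq_iff_rescaling {K S : ℕ} (hK : 1 ≤ K) (hS : 2 ≤ S)
    (h g : Params K S) (hh : h ∈ hSstar K S) (hg : g ∈ hSstar K S) :
    Segre h = Segre g ↔
      ∃ lam : Fin K → ℝ, (∏ k, lam k) = 1 ∧ ∀ k, h k = lam k • g k :=
  segre_eq_iff_rescaling_general h g hg
end

section
/- For h ∈ hS_* (all components nonzero), the set CL(h) ∩ hSdiag is nonempty and finite; moreover, if g, g' ∈ CL(h) ∩ hSdiag, then for each k there exists ε_k ∈ {−1, +1} with ∏_k ε_k = 1 such that g'_k = ε_k g_k. -/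
open scoped BigOperators ENNReal
open Finset

/-!
Two elements of `CL(h)` differ by componentwise scales `ε_k` with `∏ ε_k = 1`. If both lie in
`hSdiag`, then `|ε_k| = ‖g'_k‖_∞ / ‖g_k‖_∞` does not depend on `k`, so `|ε_k| ^ K = 1` and every
`ε_k` is a sign; hence `CL(h) ∩ hSdiag` is the image of a subset of `{±1}^K`. It is nonempty because
rescaling `h_k` by `(∏_j ‖h_j‖_∞)^{1/K} / ‖h_k‖_∞` balances all sup norms.
-/

lemma supnorm_smul {S : ℕ} (c : ℝ) (x : Fin S → ℝ) : supnorm (c • x) = |c| * supnorm x := by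
  simp only [supnorm, Pi.smul_apply, smul_eq_mul, abs_mul, Real.mul_iSup_of_nonneg (abs_nonneg c)]

lemma supnorm_pos {S : ℕ} {x : Fin S → ℝ} (hx : x ≠ 0) : 0 < supnorm x := by
  obtain ⟨i, hi⟩ := Function.ne_iff.mp hx
  exact (abs_pos.mpr hi).trans_le (le_ciSup (f := fun i => |x i|) (Set.finite_range _).bddAbove i)

lemma exists_prod_eq_one_mul_eq_mul {ι : Type*} [Fintype ι] {ν : ι → ℝ} (hν : ∀ i, 0 < ν i) :
    ∃ lam : ι → ℝ, (∀ i, 0 < lam i) ∧ ∏ i, lam i = 1 ∧ ∀ i j, lam i * ν i = lam j * ν j := by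
  set P := ∏ j, ν j
  have hP : 0 < P := prod_pos fun i _ => hν i
  set c := P ^ ((Fintype.card ι : ℝ)⁻¹)
  have hc : 0 < c := Real.rpow_pos_of_pos hP _
  have hcpow : c ^ Fintype.card ι = P := by
    rcases isEmpty_or_nonempty ι with hι | hι
    · simp [P] -- `c = P ^ 0⁻¹ = 1` and `P = 1` (empty product)
    · exact Real.rpow_inv_natCast_pow hP.le Fintype.card_ne_zero
  refine ⟨fun i => c / ν i, fun i => div_pos hc (hν i), ?_, fun i j => ?_⟩
  · rw [prod_div_distrib, prod_const, card_univ, hcpow, div_self hP.ne']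
  · rw [div_mul_cancel₀ _ (hν i).ne', div_mul_cancel₀ _ (hν j).ne']

lemma abs_eq_one_of_prod_eq_one {ι : Type*} [Fintype ι] {ε : ι → ℝ} (hprod : ∏ i, ε i = 1)
    (habs : ∀ i j, |ε i| = |ε j|) (i : ι) : |ε i| = 1 := by
  have : Nonempty ι := ⟨i⟩
  have hpow : |ε i| ^ Fintype.card ι = 1 := by
    calc |ε i| ^ Fintype.card ι = ∏ j, |ε j| := by simp [habs _ i]
      _ = 1 := by rw [← abs_prod, hprod, abs_one]
  exact (pow_eq_one_iff_of_nonneg (abs_nonneg _) Fintype.card_ne_zero).mp hpow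

section Rescaling

variable {K S : ℕ}

lemma exists_smul_of_mem_CL {h g g' : Params K S} (hg : g ∈ CL h) (hg0 : g ∈ hSstar K S)
    (hg' : g' ∈ CL h) : ∃ ε : Fin K → ℝ, ∏ k, ε k = 1 ∧ ∀ k, g' k = ε k • g k := by
  obtain ⟨lam, hlam, hg⟩ := hg
  obtain ⟨mu, hmu, hg'⟩ := hg'
  have hlam0 : ∀ k, lam k ≠ 0 := fun k hk => hg0 k (by rw [hg k, hk, zero_smul])
  refine ⟨fun k => mu k / lam k, by rw [prod_div_distrib, hmu, hlam, div_one], fun k => ?_⟩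
  rw [hg' k, hg k, smul_smul, div_mul_cancel₀ _ (hlam0 k)]

lemma exists_sign_smul_of_mem_CL_inter_hSdiag {h g g' : Params K S}
    (hg : g ∈ CL h ∩ hSdiag K S) (hg' : g' ∈ CL h ∩ hSdiag K S) :
    ∃ ε : Fin K → ℝ, (∀ k, ε k = 1 ∨ ε k = -1) ∧ ∏ k, ε k = 1 ∧ ∀ k, g' k = ε k • g k := by
  obtain ⟨hgCL, hg0, hgdiag⟩ := hg
  obtain ⟨hg'CL, -, hg'diag⟩ := hg'
  obtain ⟨ε, hprod, hε⟩ := exists_smul_of_mem_CL hgCL hg0 hg'CL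
  have habs : ∀ k, |ε k| = supnorm (g' k) / supnorm (g k) := fun k => by
    rw [eq_div_iff (supnorm_pos (hg0 k)).ne', hε k, supnorm_smul]
  have habs_eq : ∀ k j, |ε k| = |ε j| := fun k j => by
    rw [habs, habs, hgdiag k j, hg'diag k j]
  exact ⟨ε, fun k => (abs_eq zero_le_one).mp (abs_eq_one_of_prod_eq_one hprod habs_eq k),
    hprod, hε⟩

lemma CL_inter_hSdiag_nonempty {h : Params K S} (hh : h ∈ hSstar K S) :
    (CL h ∩ hSdiag K S).Nonempty := by
  obtain ⟨lam, hlam_pos, hlam_prod, hlam_eq⟩ :=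
    exists_prod_eq_one_mul_eq_mul fun k => supnorm_pos (hh k)
  have hsupnorm : ∀ k, supnorm (lam k • h k) = lam k * supnorm (h k) := fun k => by
    rw [supnorm_smul, abs_of_pos (hlam_pos k)]
  refine ⟨fun k => lam k • h k, ⟨lam, hlam_prod, fun k => rfl⟩, fun k => ?_, fun k j => ?_⟩
  · exact smul_ne_zero (hlam_pos k).ne' (hh k)
  · simp only [hsupnorm, hlam_eq k j]

lemma CL_inter_hSdiag_finite (h : Params K S) : (CL h ∩ hSdiag K S).Finite := by
  rcases (CL h ∩ hSdiag K S).eq_empty_or_nonempty with hempty | ⟨g₀, hg₀⟩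
  · exact hempty ▸ Set.finite_empty
  refine ((Set.Finite.pi fun _ => Set.toFinite ({1, -1} : Set ℝ)).image
    fun ε k => ε k • g₀ k).subset fun g hg => ?_
  obtain ⟨ε, hsign, -, hε⟩ := exists_sign_smul_of_mem_CL_inter_hSdiag hg₀ hg
  exact ⟨ε, fun k _ => hsign k, funext fun k => (hε k).symm⟩

end Rescaling

theorem cl_inter_diag_nonempty_finite_general {K S : ℕ}
    (h : Params K S) (hh : h ∈ hSstar K S) :
    (CL h ∩ hSdiag K S).Nonempty ∧ (CL h ∩ hSdiag K S).Finite ∧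
      ∀ g ∈ CL h ∩ hSdiag K S, ∀ g' ∈ CL h ∩ hSdiag K S,
        ∃ eps : Fin K → ℝ, (∀ k, eps k = 1 ∨ eps k = -1) ∧ (∏ k, eps k) = 1 ∧
          ∀ k, g' k = eps k • g k :=
  ⟨CL_inter_hSdiag_nonempty hh, CL_inter_hSdiag_finite h,
    fun _ hg _ hg' => exists_sign_smul_of_mem_CL_inter_hSdiag hg hg'⟩

/-- `CL(h) ∩ hSdiag` is nonempty and finite, and any two of its
elements differ componentwise by signs `ε_k ∈ {±1}` with `∏ ε_k = 1`. -/
theorem cl_inter_diag_nonempty_finite {K S : ℕ} (hK : 1 ≤ K) (hS : 2 ≤ S)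
    (h : Params K S) (hh : h ∈ hSstar K S) :
    (CL h ∩ hSdiag K S).Nonempty ∧ (CL h ∩ hSdiag K S).Finite ∧
      ∀ g ∈ CL h ∩ hSdiag K S, ∀ g' ∈ CL h ∩ hSdiag K S,
        ∃ eps : Fin K → ℝ, (∀ k, eps k = 1 ∨ eps k = -1) ∧ (∏ k, eps k) = 1 ∧
          ∀ k, g' k = eps k • g k :=
  cl_inter_diag_nonempty_finite_general h hh
end

section
/- For any q ∈ [1, ∞] and any h, g ∈ hS_*: ‖P(h) − P(g)‖_q ≤ S^{(K−1)/q} · K^{1−1/q} · max(‖P(h)‖_∞^{1−1/K}, ‖P(g)‖_∞^{1−1/K}) · d_q(CL(h), CL(g)). -/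
/-!
Rescaling inside a class does not change `P`, so both sides may be computed on balanced
representatives `h'`, `g'`, all of whose factors have sup norm `a`, resp. `b`; then
`‖P(h')‖_∞ = a ^ K`. Telescoping the product gives
`|P(h')_i - P(g')_i| ≤ max a b ^ (K - 1) * ∑ k, |h'_{k, i_k} - g'_{k, i_k}|`, and the power-mean
inequality over `k`, together with the fact that each entry `(k, j)` occurs in `S ^ (K - 1)`
multi-indices, turns this into the `ℓ^q` bound.
-/

open scoped BigOperators ENNReal
open Finset

section Norms

variable {ι : Type*} [Fintype ι]

lemma pnorm_eq_norm_toLp {p : ℝ≥0∞} (hp : p ≠ 0) (x : ι → ℝ) :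
    pnorm p x = ‖WithLp.toLp p x‖ := by
  rcases eq_or_ne p ∞ with rfl | hp_top
  · simp [pnorm, PiLp.norm_eq_ciSup]
  · simp [pnorm, hp_top, PiLp.norm_eq_sum (ENNReal.toReal_pos hp hp_top)]

lemma pnorm_nonneg (p : ℝ≥0∞) (x : ι → ℝ) : 0 ≤ pnorm p x := by
  unfold pnorm
  split_ifs
  · exact Real.iSup_nonneg fun i => abs_nonneg (x i)
  · positivity

lemma pnorm_smul {p : ℝ≥0∞} (hp : 1 ≤ p) (c : ℝ) (x : ι → ℝ) :
    pnorm p (c • x) = |c| * pnorm p x := by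
  have : Fact (1 ≤ p) := ⟨hp⟩
  have hp₀ : p ≠ 0 := (zero_lt_one.trans_le hp).ne'
  rw [pnorm_eq_norm_toLp hp₀, pnorm_eq_norm_toLp hp₀, WithLp.toLp_smul, norm_smul,
    Real.norm_eq_abs]

lemma pnorm_top_eq_norm (x : ι → ℝ) : pnorm ∞ x = ‖x‖ := by
  rw [pnorm_eq_norm_toLp ENNReal.top_ne_zero, PiLp.norm_toLp]

lemma supnorm_eq_norm {S : ℕ} (x : Fin S → ℝ) : supnorm x = ‖x‖ := by
  simpa [pnorm, supnorm] using pnorm_top_eq_norm x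

end Norms

lemma abs_prod_sub_prod_le {ι : Type*} [Fintype ι] {a b : ι → ℝ} {c : ℝ}
    (ha : ∀ i, |a i| ≤ c) (hb : ∀ i, |b i| ≤ c) :
    |∏ i, a i - ∏ i, b i| ≤ c ^ (Fintype.card ι - 1) * ∑ i, |a i - b i| := by
  classical
  have hterm : ∀ i, (∏ j, if j = i then |a i - b i| else max |a j| |b j|) ≤
      c ^ (Fintype.card ι - 1) * |a i - b i| := by
    intro i
    rw [← mul_prod_erase univ _ (mem_univ i), if_pos rfl, mul_comm,
      prod_congr rfl fun j hj => if_neg (ne_of_mem_erase hj)]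
    gcongr
    calc ∏ j ∈ univ.erase i, max |a j| |b j| ≤ ∏ _j ∈ univ.erase i, c :=
          prod_le_prod (fun _ _ => by positivity) fun j _ => max_le (ha j) (hb j)
      _ = c ^ (Fintype.card ι - 1) := by rw [prod_const, card_erase_of_mem (mem_univ i), card_univ]
  have hmulti := (MultilinearMap.mkPiAlgebra ℝ ι ℝ).norm_image_sub_le_of_bound'
    zero_le_one (fun m => by simp [norm_prod]) a b
  simp only [MultilinearMap.mkPiAlgebra_apply, Real.norm_eq_abs, one_mul] at hmulti
  exact hmulti.trans ((sum_le_sum fun i _ => hterm i).trans_eq (mul_sum _ _ _).symm)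

lemma sum_apply_eval {ι κ : Type*} [Fintype ι] [DecidableEq ι] [Fintype κ] (i : ι)
    (f : κ → ℝ) :
    ∑ x : ι → κ, f (x i) =
      (Fintype.card κ : ℝ) ^ ((Fintype.card ι : ℝ) - 1) * ∑ j, f j := by
  have hι : 1 ≤ Fintype.card ι := Fintype.card_pos_iff.2 ⟨i⟩
  rw [← Fintype.piFinset_univ, Fintype.sum_piFinset_apply, nsmul_eq_mul, card_univ,
    Nat.cast_pow, ← Real.rpow_natCast, Nat.cast_sub hι, Nat.cast_one]

lemma pnorm_le_of_abs_le_sum_eval {ι κ : Type*} [Fintype ι] [DecidableEq ι] [Fintype κ]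
    {q : ℝ≥0∞} (hq : 1 ≤ q) {F : (ι → κ) → ℝ} {D : ι × κ → ℝ}
    (hF : ∀ x, |F x| ≤ ∑ i, |D (i, x i)|) :
    pnorm q F ≤ (Fintype.card κ : ℝ) ^ (((Fintype.card ι : ℝ) - 1) / q.toReal) *
      (Fintype.card ι : ℝ) ^ (1 - 1 / q.toReal) * pnorm q D := by
  rcases eq_or_ne q ∞ with rfl | hq_top
  · simp only [ENNReal.toReal_top, div_zero, Real.rpow_zero, sub_zero, Real.rpow_one, one_mul,
      pnorm_top_eq_norm]
    refine (pi_norm_le_iff_of_nonneg (by positivity)).2 fun x => (hF x).trans ?_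
    calc ∑ i, |D (i, x i)| ≤ ∑ _i : ι, ‖D‖ := sum_le_sum fun i _ => norm_le_pi_norm D _
      _ = Fintype.card ι * ‖D‖ := by rw [sum_const, card_univ, nsmul_eq_mul]
  set p := q.toReal
  have hp : 1 ≤ p := by simpa using ENNReal.toReal_mono hq_top hq
  have hp₀ : 0 < p := zero_lt_one.trans_le hp
  set n : ℝ := (Fintype.card ι : ℝ)
  set m : ℝ := (Fintype.card κ : ℝ)
  have hsum : ∑ x, |F x| ^ p ≤ n ^ (p - 1) * (m ^ (n - 1) * ∑ y, |D y| ^ p) :=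
    calc ∑ x, |F x| ^ p ≤ ∑ x, n ^ (p - 1) * ∑ i, |D (i, x i)| ^ p :=
          sum_le_sum fun x _ => (Real.rpow_le_rpow (abs_nonneg _) (hF x) hp₀.le).trans <| by
            simpa using Real.rpow_sum_le_const_mul_sum_rpow univ (fun i => D (i, x i)) hp
      _ = n ^ (p - 1) * ∑ i, m ^ (n - 1) * ∑ j, |D (i, j)| ^ p := by
          rw [← mul_sum, sum_comm]
          exact congrArg _ (sum_congr rfl fun i _ => sum_apply_eval i fun j => |D (i, j)| ^ p)
      _ = n ^ (p - 1) * (m ^ (n - 1) * ∑ y, |D y| ^ p) := by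
          rw [← mul_sum, Fintype.sum_prod_type]
  simp only [pnorm, hq_top, if_false]
  calc (∑ x, |F x| ^ p) ^ (1 / p)
      ≤ (n ^ (p - 1) * (m ^ (n - 1) * ∑ y, |D y| ^ p)) ^ (1 / p) :=
        Real.rpow_le_rpow (by positivity) hsum (by positivity)
    _ = m ^ ((n - 1) / p) * n ^ (1 - 1 / p) * (∑ y, |D y| ^ p) ^ (1 / p) := by
        rw [Real.mul_rpow (by positivity) (by positivity), Real.mul_rpow (by positivity)
          (by positivity), ← Real.rpow_mul (by positivity), ← Real.rpow_mul (by positivity)]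
        field_simp

lemma segre_eq_of_mem_CL {K S : ℕ} {h g : Params K S} (hg : g ∈ CL h) : Segre g = Segre h := by
  obtain ⟨lam, hlam_prod, hlam⟩ := hg
  funext i
  simp only [Segre, hlam, Pi.smul_apply, smul_eq_mul, prod_mul_distrib, hlam_prod, one_mul]

lemma norm_segre {K S : ℕ} [Nonempty (Fin S)] (h : Params K S) :
    ‖Segre h‖ = ∏ k, ‖h k‖ := by
  refine le_antisymm ((pi_norm_le_iff_of_nonneg (by positivity)).2 fun i => ?_) ?_
  · rw [Segre, norm_prod]
    exact prod_le_prod (fun _ _ => norm_nonneg _) fun k _ => norm_le_pi_norm _ _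
  · choose j hj using fun k => (IsGreatest.pi_norm (h k)).1
    calc ∏ k, ‖h k‖ = ‖Segre h j‖ := by simp only [Segre, norm_prod, hj]
      _ ≤ ‖Segre h‖ := norm_le_pi_norm _ _

lemma exists_mem_CL_inter_hSdiag {K S : ℕ} (hK : K ≠ 0) {h : Params K S}
    (hh : h ∈ hSstar K S) : (CL h ∩ hSdiag K S).Nonempty := by
  have hnorm : ∀ k, 0 < ‖h k‖ := fun k => norm_pos_iff.2 (hh k)
  have hprod : 0 < ∏ k, ‖h k‖ := prod_pos fun k _ => hnorm k
  -- rescale every factor to the geometric mean `a` of the norms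
  set a := (∏ k, ‖h k‖) ^ (K : ℝ)⁻¹
  have ha : 0 < a := Real.rpow_pos_of_pos hprod _
  have ha_pow : a ^ K = ∏ k, ‖h k‖ := by
    rw [← Real.rpow_natCast, ← Real.rpow_mul hprod.le, inv_mul_cancel₀ (by exact_mod_cast hK),
      Real.rpow_one]
  have hscaled : ∀ k, ‖(a / ‖h k‖) • h k‖ = a := fun k => by
    rw [norm_smul, Real.norm_of_nonneg (div_pos ha (hnorm k)).le, div_mul_cancel₀ _ (hnorm k).ne']
  refine ⟨fun k => (a / ‖h k‖) • h k, ⟨fun k => a / ‖h k‖, ?_, fun _ => rfl⟩,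
    fun k => smul_ne_zero (div_pos ha (hnorm k)).ne' (hh k), fun k k' => ?_⟩
  · rw [prod_div_distrib, prod_const, card_univ, Fintype.card_fin, ha_pow, div_self hprod.ne']
  · rw [supnorm_eq_norm, supnorm_eq_norm, hscaled, hscaled]

lemma pnorm_segre_sub_le {K S : ℕ} {q : ℝ≥0∞} (hq : 1 ≤ q) {h g : Params K S} {c : ℝ}
    (hc : 0 ≤ c) (hh : ∀ k, ‖h k‖ ≤ c) (hg : ∀ k, ‖g k‖ ≤ c) :
    pnorm q (Segre h - Segre g) ≤ (S : ℝ) ^ (((K : ℝ) - 1) / q.toReal) *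
      (K : ℝ) ^ (1 - 1 / q.toReal) * c ^ (K - 1) * pnorm q (flat h - flat g) := by
  have hentry : ∀ (f : Params K S) (k : Fin K) (j : Fin S), ‖f k‖ ≤ c → |f k j| ≤ c :=
    fun f k j hf => (norm_le_pi_norm (f k) j).trans hf
  have hpointwise : ∀ i : Fin K → Fin S,
      |(Segre h - Segre g) i| ≤ ∑ k, |(c ^ (K - 1) • (flat h - flat g)) (k, i k)| := by
    intro i
    simpa [Segre, flat, abs_mul, abs_of_nonneg (pow_nonneg hc _), mul_sum] using
      abs_prod_sub_prod_le (fun k => hentry h k (i k) (hh k)) (fun k => hentry g k (i k) (hg k))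
  have hbound := pnorm_le_of_abs_le_sum_eval hq hpointwise
  rw [pnorm_smul hq, abs_of_nonneg (pow_nonneg hc _)] at hbound
  simpa only [Fintype.card_fin, mul_assoc] using hbound

lemma norm_eq_of_mem_hSdiag {K S : ℕ} {h : Params K S} (hh : h ∈ hSdiag K S) (j k : Fin K) :
    ‖h j‖ = ‖h k‖ := by
  simpa only [supnorm_eq_norm] using hh.2 j k

lemma pnorm_top_segre_rpow_of_mem_hSdiag {K S : ℕ} [Nonempty (Fin S)] {h : Params K S}
    (hh : h ∈ hSdiag K S) (k : Fin K) :
    pnorm ∞ (Segre h) ^ (1 - 1 / (K : ℝ)) = ‖h k‖ ^ (K - 1) := by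
  have hK : (K : ℝ) ≠ 0 := by exact_mod_cast k.pos.ne'
  rw [pnorm_top_eq_norm, norm_segre, prod_congr rfl fun j _ => norm_eq_of_mem_hSdiag hh j k,
    prod_const, card_univ, Fintype.card_fin, ← Real.rpow_natCast, ← Real.rpow_natCast,
    ← Real.rpow_mul (norm_nonneg _), Nat.cast_sub k.pos, Nat.cast_one]
  congr 1
  field_simp

lemma pnorm_segre_sub_le_of_mem_hSdiag {K S : ℕ} (hK : 1 ≤ K) {q : ℝ≥0∞} (hq : 1 ≤ q)
    {h g : Params K S} (hh : h ∈ hSdiag K S) (hg : g ∈ hSdiag K S) :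
    pnorm q (Segre h - Segre g) ≤
      (S : ℝ) ^ (((K : ℝ) - 1) / q.toReal) * (K : ℝ) ^ ((1 : ℝ) - 1 / q.toReal) *
        max ((pnorm ⊤ (Segre h)) ^ ((1 : ℝ) - 1 / (K : ℝ)))
            ((pnorm ⊤ (Segre g)) ^ ((1 : ℝ) - 1 / (K : ℝ))) *
        pnorm q (flat h - flat g) := by
  let k : Fin K := ⟨0, hK⟩
  have : Nonempty (Fin S) := ⟨(Function.ne_iff.1 (hh.1 k)).choose⟩
  rw [pnorm_top_segre_rpow_of_mem_hSdiag hh k, pnorm_top_segre_rpow_of_mem_hSdiag hg k]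
  have hmax :
      max ‖h k‖ ‖g k‖ ^ (K - 1) ≤ max (‖h k‖ ^ (K - 1)) (‖g k‖ ^ (K - 1)) := by
    rcases max_choice ‖h k‖ ‖g k‖ with hc | hc <;> rw [hc] <;> simp
  refine (pnorm_segre_sub_le hq (by positivity)
    (fun j => (norm_eq_of_mem_hSdiag hh j k).trans_le (le_max_left _ _))
    (fun j => (norm_eq_of_mem_hSdiag hg j k).trans_le (le_max_right _ _))).trans ?_
  gcongr
  exact pnorm_nonneg q _

theorem segre_lipschitz_general {K S : ℕ} (hK : 1 ≤ K)
    (q : ℝ≥0∞) (hq : 1 ≤ q)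
    (h g : Params K S) (hh : h ∈ hSstar K S) (hg : g ∈ hSstar K S) :
    pnorm q (Segre h - Segre g) ≤
      (S : ℝ) ^ (((K : ℝ) - 1) / q.toReal) * (K : ℝ) ^ ((1 : ℝ) - 1 / q.toReal) *
        max ((pnorm ⊤ (Segre h)) ^ ((1 : ℝ) - 1 / (K : ℝ)))
            ((pnorm ⊤ (Segre g)) ^ ((1 : ℝ) - 1 / (K : ℝ))) *
        dDist q h g := by
  obtain ⟨h₀, hh₀⟩ := exists_mem_CL_inter_hSdiag (by omega) hh
  obtain ⟨g₀, hg₀⟩ := exists_mem_CL_inter_hSdiag (by omega) hg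
  have hmax_nonneg : 0 ≤ max ((pnorm ⊤ (Segre h)) ^ ((1 : ℝ) - 1 / (K : ℝ)))
      ((pnorm ⊤ (Segre g)) ^ ((1 : ℝ) - 1 / (K : ℝ))) :=
    le_max_of_le_left (Real.rpow_nonneg (pnorm_nonneg ⊤ _) _)
  rw [dDist, ← smul_eq_mul, ← Real.sInf_smul_of_nonneg (by positivity)]
  refine le_csInf (Set.Nonempty.smul_set ⟨_, (h₀, g₀), ⟨hh₀, hg₀⟩, rfl⟩) ?_
  rintro _ ⟨_, ⟨⟨h', g'⟩, ⟨hh', hg'⟩, rfl⟩, rfl⟩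
  dsimp only
  rw [smul_eq_mul, ← segre_eq_of_mem_CL hh'.1, ← segre_eq_of_mem_CL hg'.1]
  exact pnorm_segre_sub_le_of_mem_hSdiag hK hq hh'.2 hg'.2

/-- "Lipschitz continuity" of the Segre map `P` with respect to `d_q`. -/
theorem segre_lipschitz {K S : ℕ} (hK : 1 ≤ K) (hS : 2 ≤ S)
    (q : ℝ≥0∞) (hq : 1 ≤ q)
    (h g : Params K S) (hh : h ∈ hSstar K S) (hg : g ∈ hSstar K S) :
    pnorm q (Segre h - Segre g) ≤
      (S : ℝ) ^ (((K : ℝ) - 1) / q.toReal) * (K : ℝ) ^ ((1 : ℝ) - 1 / q.toReal) *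
        max ((pnorm ⊤ (Segre h)) ^ ((1 : ℝ) - 1 / (K : ℝ)))
            ((pnorm ⊤ (Segre g)) ^ ((1 : ℝ) - 1 / (K : ℝ))) *
        dDist q h g :=
  segre_lipschitz_general hK q hq h g hh hg
end

section
/- Assume X = 𝒜P(h̄) with h̄ ∈ M_{L̄} for some L̄. Then: (1) the only minimizers of ‖𝒜P(h) − X‖² over ∪_L M_L are the elements of CL(h̄) if and only if for every L, (P(h̄) + ker 𝒜) ∩ P(M_L) ⊆ {P(h̄)}; (2) the collection of models M is identifiable (i.e., statement (1) holds for every L̄ and every h̄ ∈ M_{L̄}) if and only if for all L, L': ker(𝒜) ∩ (P(M_L) − P(M_{L'})) ⊆ {0}, where P(M_L) − P(M_{L'}) = {P(h) − P(g) : h ∈ M_L, g ∈ M_{L'}}. -/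
open scoped BigOperators ENNReal
open Finset

/-- Order-`K` tensors as a Euclidean space (Frobenius norm). -/
abbrev ETensor (K S : ℕ) := EuclideanSpace ℝ (Fin K → Fin S)

/-- The Segre map with values in the Euclidean tensor space. -/
noncomputable def SegE {K S : ℕ} (h : Params K S) : ETensor K S :=
  (WithLp.equiv 2 _).symm (Segre h)

/-- Smallest nonzero singular value of a linear map between Euclidean spaces:
the infimum of `‖A T‖` over unit vectors orthogonal to the kernel. -/
noncomputable def sigmaMin {E F : Type*} [NormedAddCommGroup E] [InnerProductSpace ℝ E]
    [NormedAddCommGroup F] [InnerProductSpace ℝ F] (A : E →ₗ[ℝ] F) : ℝ :=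
  sInf ((fun T => ‖A T‖) '' {T | T ∈ (LinearMap.ker A)ᗮ ∧ ‖T‖ = 1})

/-- The Deep-Null Space Property with constants `(γ, ρ)`. -/
def DeepNSP {K S m n : ℕ} (A : ETensor K S →ₗ[ℝ] EuclideanSpace ℝ (Fin m × Fin n))
    (Mod : ℕ → Set (Params K S)) (γ : ℝ) (ρ : ℝ≥0∞) : Prop :=
  ∀ L L' : ℕ, ∀ h ∈ Mod L, ∀ g ∈ Mod L',
    ENNReal.ofReal ‖A (SegE h - SegE g)‖ ≤ ρ →
    ∀ T' ∈ LinearMap.ker A, ‖SegE h - SegE g‖ ≤ γ * ‖SegE h - SegE g - T'‖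

/-- `CL(h̄)` is identifiable: every minimizer of `‖𝒜P(h) − 𝒜P(h̄)‖²` over
`∪_L Mod L` belongs to `CL(h̄)`. -/
def IdentifiableClass {K S m n : ℕ}
    (A : ETensor K S →ₗ[ℝ] EuclideanSpace ℝ (Fin m × Fin n))
    (Mod : ℕ → Set (Params K S)) (hbar : Params K S) : Prop :=
  ∀ L : ℕ, ∀ hstar ∈ Mod L,
    (∀ L' : ℕ, ∀ h ∈ Mod L',
      ‖A (SegE hstar) - A (SegE hbar)‖ ^ 2 ≤ ‖A (SegE h) - A (SegE hbar)‖ ^ 2) →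
    hstar ∈ CL hbar

theorem Segre_eq_of_mem_CL {K S : ℕ} {g h : Params K S} (hg : g ∈ CL h) :
    Segre g = Segre h := by
  obtain ⟨lam, hprod, hcomp⟩ := hg
  funext i
  simp only [Segre, hcomp, Pi.smul_apply, smul_eq_mul]
  rw [prod_mul_distrib, hprod, one_mul]

theorem Segre_update {K S : ℕ} (v : Params K S) (j : Fin K → Fin S) (k : Fin K) (s : Fin S) :
    Segre v (Function.update j k s) = v k s * ∏ k' ∈ univ.erase k, v k' (j k') := by
  rw [Segre, ← mul_prod_erase univ _ (mem_univ k), Function.update_self]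
  congr 1
  exact prod_congr rfl fun k' hk' => by rw [Function.update_of_ne (mem_erase.mp hk').1]

/-- The scales are read off at an index `j` where every component of `h` is nonzero:
`lam k = g k (j k) / h k (j k)`. -/
theorem mem_CL_of_Segre_eq {K S : ℕ} {g h : Params K S} (hh : h ∈ hSstar K S)
    (heq : Segre g = Segre h) : g ∈ CL h := by
  choose j hj using fun k => Function.ne_iff.mp (hh k)
  have hSegre_j : Segre h j ≠ 0 := prod_ne_zero_iff.mpr fun k _ => hj k
  refine ⟨fun k => g k (j k) / h k (j k), ?_, fun k => funext fun s => ?_⟩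
  · rw [prod_div_distrib]
    exact (congrArg (· / Segre h j) (congrFun heq j)).trans (div_self hSegre_j)
  have hs := congrFun heq (Function.update j k s)
  have hjk := congrFun heq (Function.update j k (j k))
  rw [Segre_update, Segre_update] at hs hjk
  have hrest : ∏ k' ∈ univ.erase k, g k' (j k') ≠ 0 := by
    refine right_ne_zero_of_mul (a := g k (j k)) ?_
    rw [hjk, ← Segre_update, Function.update_eq_self]
    exact hSegre_j
  have hcross : g k s * h k (j k) = h k s * g k (j k) :=
    mul_right_cancel₀ hrest (by linear_combination h k (j k) * hs - h k s * hjk)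
  rw [Pi.smul_apply, smul_eq_mul, div_mul_eq_mul_div, eq_div_iff (hj k), hcross, mul_comm]

theorem Segre_eq_iff_mem_CL {K S : ℕ} {g h : Params K S} (hh : h ∈ hSstar K S) :
    Segre g = Segre h ↔ g ∈ CL h :=
  ⟨mem_CL_of_Segre_eq hh, Segre_eq_of_mem_CL⟩

theorem SegE_eq_iff {K S : ℕ} {g h : Params K S} : SegE g = SegE h ↔ Segre g = Segre h :=
  (WithLp.equiv 2 _).symm.injective.eq_iff

section Minimizers

variable {K S m n : ℕ} (A : ETensor K S →ₗ[ℝ] EuclideanSpace ℝ (Fin m × Fin n))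
  {Mod : ℕ → Set (Params K S)}

/-- Since `h̄` is feasible with residual `0`, the minimizers are exactly the zeros of the residual. -/
theorem isMinimizer_iff_sub_mem_ker {Lbar : ℕ} {hbar : Params K S} (hbar_mem : hbar ∈ Mod Lbar)
    (g : Params K S) :
    (∀ L' : ℕ, ∀ h ∈ Mod L',
      ‖A (SegE g) - A (SegE hbar)‖ ^ 2 ≤ ‖A (SegE h) - A (SegE hbar)‖ ^ 2) ↔
      SegE g - SegE hbar ∈ LinearMap.ker A := by
  rw [LinearMap.mem_ker, map_sub]
  constructor
  · intro hmin
    have h0 := hmin Lbar hbar hbar_mem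
    rwa [sub_self, norm_zero, zero_pow two_ne_zero, sq_nonpos_iff, norm_eq_zero] at h0
  · intro hzero L' h _
    rw [hzero, norm_zero, zero_pow two_ne_zero]
    positivity

theorem identifiableClass_iff {Lbar : ℕ} {hbar : Params K S} (hbar_mem : hbar ∈ Mod Lbar)
    (hbar_star : hbar ∈ hSstar K S) :
    IdentifiableClass A Mod hbar ↔
      ∀ L : ℕ, ∀ g ∈ Mod L, SegE g - SegE hbar ∈ LinearMap.ker A → SegE g = SegE hbar := by
  simp only [IdentifiableClass, isMinimizer_iff_sub_mem_ker A hbar_mem, SegE_eq_iff,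
    Segre_eq_iff_mem_CL hbar_star]

end Minimizers

theorem identifiability_characterization_general {K S m n : ℕ}
    (A : ETensor K S →ₗ[ℝ] EuclideanSpace ℝ (Fin m × Fin n))
    (Mod : ℕ → Set (Params K S))
    (hModStar : ∀ L, Mod L ⊆ hSstar K S) :
    -- (1) pointwise characterization
    (∀ Lbar : ℕ, ∀ hbar ∈ Mod Lbar,
      (IdentifiableClass A Mod hbar ↔
        ∀ L : ℕ, ∀ g ∈ Mod L, SegE g - SegE hbar ∈ LinearMap.ker A →
          SegE g = SegE hbar)) ∧
    -- (2) global characterization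
    ((∀ Lbar : ℕ, ∀ hbar ∈ Mod Lbar, IdentifiableClass A Mod hbar) ↔
      ∀ L L' : ℕ, ∀ h ∈ Mod L, ∀ g ∈ Mod L',
        SegE h - SegE g ∈ LinearMap.ker A → SegE h = SegE g) := by
  have pointwise : ∀ Lbar : ℕ, ∀ hbar ∈ Mod Lbar, (IdentifiableClass A Mod hbar ↔
      ∀ L : ℕ, ∀ g ∈ Mod L, SegE g - SegE hbar ∈ LinearMap.ker A → SegE g = SegE hbar) :=
    fun Lbar hbar hbar_mem => identifiableClass_iff A hbar_mem (hModStar Lbar hbar_mem)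
  refine ⟨pointwise, ⟨fun hid L L' h hh g hg => ?_, fun hglob Lbar hbar hbar_mem => ?_⟩⟩
  · exact (pointwise L' g hg).mp (hid L' g hg) L h hh
  · exact (pointwise Lbar hbar hbar_mem).mpr fun L g hg => hglob L Lbar g hg hbar hbar_mem

/-- necessary and sufficient conditions of identifiability. -/
theorem identifiability_characterization {K S m n : ℕ} (hK : 1 ≤ K) (hS : 2 ≤ S)
    (A : ETensor K S →ₗ[ℝ] EuclideanSpace ℝ (Fin m × Fin n))
    (Mod : ℕ → Set (Params K S))
    (hModNonempty : ∀ L, (Mod L).Nonempty)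
    (hModStar : ∀ L, Mod L ⊆ hSstar K S) :
    -- (1) pointwise characterization
    (∀ Lbar : ℕ, ∀ hbar ∈ Mod Lbar,
      (IdentifiableClass A Mod hbar ↔
        ∀ L : ℕ, ∀ g ∈ Mod L, SegE g - SegE hbar ∈ LinearMap.ker A →
          SegE g = SegE hbar)) ∧
    -- (2) global characterization
    ((∀ Lbar : ℕ, ∀ hbar ∈ Mod Lbar, IdentifiableClass A Mod hbar) ↔
      ∀ L L' : ℕ, ∀ h ∈ Mod L, ∀ g ∈ Mod L',
        SegE h - SegE g ∈ LinearMap.ker A → SegE h = SegE g) :=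
  identifiability_characterization_general A Mod hModStar
end
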